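/- In B_4, if β', β'', β''' are strongly quasipositive braids (possibly trivial), then the braid σ_{1,3}^{−1} σ_{2,4} β' σ_{3,4} β'' σ_{1,2} β''' is quasipositive. -/

import Mathlib

/-- Relations for the braid group `Bₙ`: the generator `k : Fin (n-1)` represents `σ_{k+1}`,
and we impose `σ_i σ_j = σ_j σ_i` for `|i - j| > 1` and `σ_i σ_{i+1} σ_i = σ_{i+1} σ_i σ_{i+1}`. -/
def braidRels (n : ℕ) : Set (FreeGroup (Fin (n - 1))) :=
  {r | ∃ i j : Fin (n - 1), (i : ℕ) + 1 < (j : ℕ) ∧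
      r = FreeGroup.of i * FreeGroup.of j * (FreeGroup.of i)⁻¹ * (FreeGroup.of j)⁻¹} ∪
  {r | ∃ i j : Fin (n - 1), (j : ℕ) = (i : ℕ) + 1 ∧
      r = FreeGroup.of i * FreeGroup.of j * FreeGroup.of i *
          (FreeGroup.of j * FreeGroup.of i * FreeGroup.of j)⁻¹}

/-- The braid group on `n` strands, presented with generators `σ_1, …, σ_{n-1}`. -/
abbrev BraidGroup (n : ℕ) : Type := PresentedGroup (braidRels n)

/-- The standard generator `σ_i` of `Bₙ`, for `1 ≤ i ≤ n - 1` (junk value `1` otherwise). -/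
def sigma (n i : ℕ) : BraidGroup n :=
  if h : 1 ≤ i ∧ i ≤ n - 1 then PresentedGroup.of ⟨i - 1, by omega⟩ else 1

/-- The word `σ_{j-1} σ_{j-2} ⋯ σ_{i+1}`. -/
def bandConj (n i j : ℕ) : BraidGroup n :=
  ((List.range (j - 1 - i)).map fun t => sigma n (j - 1 - t)).prod

/-- The band generator `σ_{i,j} = (σ_{j-1} σ_{j-2} ⋯ σ_{i+1}) σ_i (σ_{j-1} σ_{j-2} ⋯ σ_{i+1})⁻¹`.
In particular `σ_{i,i+1} = σ_i`. -/
def band (n i j : ℕ) : BraidGroup n :=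
  bandConj n i j * sigma n i * (bandConj n i j)⁻¹

/-- The set of band generators `σ_{i,j}`, `1 ≤ i < j ≤ n`, of `Bₙ`. -/
def bandGens (n : ℕ) : Set (BraidGroup n) :=
  {x | ∃ i j : ℕ, 1 ≤ i ∧ i < j ∧ j ≤ n ∧ x = band n i j}

/-- A braid is strongly quasipositive if it is a product of band generators, i.e. lies in the
submonoid generated by the `σ_{i,j}`, `1 ≤ i < j ≤ n`. -/
def StronglyQuasipositive (n : ℕ) (x : BraidGroup n) : Prop :=
  x ∈ Submonoid.closure (bandGens n)

/-- A braid is quasipositive if it lies in the submonoid generated by all conjugates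
`α σ_k α⁻¹` of the standard generators. -/
def Quasipositive (n : ℕ) (x : BraidGroup n) : Prop :=
  x ∈ Submonoid.closure
    {x : BraidGroup n | ∃ (α : BraidGroup n) (k : ℕ), 1 ≤ k ∧ k ≤ n - 1 ∧ x = α * sigma n k * α⁻¹}

/-! The band relation `σ_{2,4} c = c σ_{1,3}` for `c = σ_{3,4} σ_{1,2}`, a consequence of
`σ₁σ₂σ₁ = σ₂σ₁σ₂`, absorbs the negative letter: the braid equals
`(σ_{1,3}⁻¹ c σ_{1,3}) (c⁻¹ β' c) (σ_{1,2}⁻¹ β'' σ_{1,2}) β'''`, a product of conjugates of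
strongly quasipositive braids. -/

namespace BraidGroup

variable {n : ℕ}

lemma of_mul_of_mul_of {i j : Fin (n - 1)} (h : (j : ℕ) = i + 1) :
    (PresentedGroup.of i : BraidGroup n) * .of j * .of i = .of j * .of i * .of j := by
  have hrel := PresentedGroup.mk_eq_mk_of_mul_inv_mem (rels := braidRels n) (Or.inr ⟨i, j, h, rfl⟩)
  rw [map_mul, map_mul, map_mul, map_mul] at hrel
  exact hrel

lemma sigma_mul_sigma_mul_sigma {i : ℕ} (hi : 1 ≤ i) (hin : i + 1 ≤ n - 1) :
    sigma n i * sigma n (i + 1) * sigma n i = sigma n (i + 1) * sigma n i * sigma n (i + 1) := by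
  rw [sigma, sigma, dif_pos ⟨hi, by omega⟩, dif_pos ⟨by omega, hin⟩]
  exact of_mul_of_mul_of (by simp only; omega)

lemma band_succ (i : ℕ) : band n i (i + 1) = sigma n i := by
  simp [band, bandConj]

lemma band_add_two (i : ℕ) :
    band n i (i + 2) = sigma n (i + 1) * sigma n i * (sigma n (i + 1))⁻¹ := by
  simp [band, bandConj, List.range_succ]

lemma band_mul_band_mul_band {i : ℕ} (hi : 1 ≤ i) (hin : i + 1 ≤ n - 1) :
    band n (i + 1) (i + 3) * (band n (i + 2) (i + 3) * band n i (i + 1)) =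
      band n (i + 2) (i + 3) * band n i (i + 1) * band n i (i + 2) := by
  rw [show i + 3 = i + 1 + 2 by omega, band_add_two, show i + 1 + 2 = i + 2 + 1 by omega,
    band_succ, band_succ, band_add_two]
  calc sigma n (i + 2) * sigma n (i + 1) * (sigma n (i + 2))⁻¹ * (sigma n (i + 2) * sigma n i)
      = sigma n (i + 2) * (sigma n i * sigma n (i + 1) * sigma n i) * (sigma n (i + 1))⁻¹ := by
        rw [sigma_mul_sigma_mul_sigma hi hin]; group
    _ = sigma n (i + 2) * sigma n i * (sigma n (i + 1) * sigma n i * (sigma n (i + 1))⁻¹) := by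
        group

end BraidGroup

namespace Quasipositive

variable {n : ℕ}

lemma mul {x y : BraidGroup n} (hx : Quasipositive n x) (hy : Quasipositive n y) :
    Quasipositive n (x * y) :=
  Submonoid.mul_mem _ hx hy

lemma conj {x : BraidGroup n} (hx : Quasipositive n x) (g : BraidGroup n) :
    Quasipositive n (g * x * g⁻¹) := by
  induction hx using Submonoid.closure_induction with
  | mem y hy =>
    obtain ⟨α, k, hk1, hk2, rfl⟩ := hy
    exact Submonoid.subset_closure ⟨g * α, k, hk1, hk2, by group⟩
  | one => rw [mul_one, mul_inv_cancel]; exact Submonoid.one_mem _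
  | mul x y _ _ hx hy => simpa only [mul_assoc, inv_mul_cancel_left] using hx.mul hy

lemma inv_conj {x : BraidGroup n} (hx : Quasipositive n x) (g : BraidGroup n) :
    Quasipositive n (g⁻¹ * x * g) := by
  simpa only [inv_inv] using hx.conj g⁻¹

lemma band {i j : ℕ} (hi : 1 ≤ i) (hij : i < j) (hj : j ≤ n) : Quasipositive n (band n i j) :=
  Submonoid.subset_closure ⟨bandConj n i j, i, hi, by omega, rfl⟩

end Quasipositive

lemma StronglyQuasipositive.quasipositive {n : ℕ} {x : BraidGroup n}
    (hx : StronglyQuasipositive n x) : Quasipositive n x := by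
  refine Submonoid.closure_le.mpr ?_ hx
  rintro y ⟨i, j, hi, hij, hj, rfl⟩
  exact Quasipositive.band hi hij hj

/-- In `B₄`, for strongly quasipositive `β', β'', β'''`, the braid
`σ_{1,3}⁻¹ σ_{2,4} β' σ_{3,4} β'' σ_{1,2} β'''` is quasipositive. -/
theorem claim_case2_s12 (β' β'' β''' : BraidGroup 4)
    (hβ' : StronglyQuasipositive 4 β') (hβ'' : StronglyQuasipositive 4 β'')
    (hβ''' : StronglyQuasipositive 4 β''') :
    Quasipositive 4
      ((band 4 1 3)⁻¹ * band 4 2 4 * β' * band 4 3 4 * β'' * band 4 1 2 * β''') := by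
  obtain ⟨c, hc⟩ : ∃ c, c = band 4 3 4 * band 4 1 2 := ⟨_, rfl⟩
  have h24 : band 4 2 4 = c * band 4 1 3 * c⁻¹ := hc ▸
    eq_mul_inv_of_mul_eq (BraidGroup.band_mul_band_mul_band (n := 4) (i := 1) le_rfl (by norm_num))
  have hdecomp : (band 4 1 3)⁻¹ * band 4 2 4 * β' * band 4 3 4 * β'' * band 4 1 2 * β''' =
      (band 4 1 3)⁻¹ * c * band 4 1 3 * (c⁻¹ * β' * c) *
        ((band 4 1 2)⁻¹ * β'' * band 4 1 2) * β''' := by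
    rw [h24, hc]; group
  have hcq : Quasipositive 4 c := hc ▸
    (Quasipositive.band (by norm_num) (by norm_num) le_rfl).mul
      (Quasipositive.band le_rfl (by norm_num) (by norm_num))
  rw [hdecomp]
  exact (((hcq.inv_conj _).mul (hβ'.quasipositive.inv_conj _)).mul
    (hβ''.quasipositive.inv_conj _)).mul hβ'''.quasipositive
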